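/- Let I be a proper nonzero monomial ideal of S = K[x_1,…,x_n], and let s ≥ 1 be an integer such that u^s ∈ I^s for every monomial u ∈ G(\overline{I}). Then for every integer m ≥ 1 and every vector a ∈ ℕ^n, one has √(\overline{I} : x^a) = √(I^{sm} : x^{(sm)a}). -/

import Mathlib

open MvPolynomial

/-! Setting: `K` a field, `S = K[x_1, …, x_n]` realized as `MvPolynomial (Fin n) K`. -/

/-- `I` is a monomial ideal: an ideal generated by monomials. -/
def IsMonomialIdeal {K : Type} [Field K] {n : ℕ} (I : Ideal (MvPolynomial (Fin n) K)) : Prop :=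
  ∃ A : Set (Fin n →₀ ℕ), I = Ideal.span ((fun a => (monomial a (1 : K))) '' A)

/-- `I` is a squarefree monomial ideal: an ideal generated by squarefree monomials. -/
def IsSquarefreeMonomialIdeal {K : Type} [Field K] {n : ℕ}
    (I : Ideal (MvPolynomial (Fin n) K)) : Prop :=
  ∃ A : Set (Fin n →₀ ℕ), (∀ a ∈ A, ∀ i, a i ≤ 1) ∧
    I = Ideal.span ((fun a => (monomial a (1 : K))) '' A)

/-- Exponent vectors of the minimal monomial generators `G(I)` of a monomial ideal `I`:
monomials of `I` none of whose proper monomial divisors lies in `I`. -/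
def minGens {K : Type} [Field K] {n : ℕ} (I : Ideal (MvPolynomial (Fin n) K)) :
    Set (Fin n →₀ ℕ) :=
  {a | monomial a (1 : K) ∈ I ∧ ∀ b : Fin n →₀ ℕ, b ≤ a → b ≠ a → monomial b (1 : K) ∉ I}

/-- `γ(I) = min{deg_{x_j}(u) : 1 ≤ j ≤ n, u ∈ G(I), x_j ∣ u}`. -/
noncomputable def gammaI {K : Type} [Field K] {n : ℕ}
    (I : Ideal (MvPolynomial (Fin n) K)) : ℕ :=
  sInf {d | ∃ a ∈ minGens I, ∃ j : Fin n, a j ≠ 0 ∧ a j = d}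

/-- The `m`-th symbolic power `I^(m) = ⋂_{p ∈ Min(I)} Ker(S → (S/I^m)_p)`; the kernel of
`S → (S/I^m)_p` is the contraction of `I^m S_p` from the localization `S_p`. -/
noncomputable def symbolicPower {K : Type} [Field K] {n : ℕ}
    (I : Ideal (MvPolynomial (Fin n) K)) (m : ℕ) : Ideal (MvPolynomial (Fin n) K) :=
  ⨅ (p : Ideal (MvPolynomial (Fin n) K)) (hp : p ∈ I.minimalPrimes),
    Ideal.comap (algebraMap (MvPolynomial (Fin n) K)
        (Localization (@Ideal.primeCompl _ _ p hp.1.1)))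
      ((I ^ m).map (algebraMap (MvPolynomial (Fin n) K)
        (Localization (@Ideal.primeCompl _ _ p hp.1.1))))

/-- The integral closure of an ideal `I`: the (ideal generated by the) set of elements `f`
satisfying an equation `f^k + c_1 f^(k-1) + ⋯ + c_k = 0` with `c_i ∈ I^i`.  (This set is
already an ideal, so taking the span is harmless.) -/
noncomputable def intCl {K : Type} [Field K] {n : ℕ} (I : Ideal (MvPolynomial (Fin n) K)) :
    Ideal (MvPolynomial (Fin n) K) :=
  Ideal.span {f | ∃ k : ℕ, 1 ≤ k ∧ ∃ c : ℕ → MvPolynomial (Fin n) K,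
    (∀ i ∈ Finset.Icc 1 k, c i ∈ I ^ i) ∧
    f ^ k + ∑ i ∈ Finset.Icc 1 k, c i * f ^ (k - i) = 0}

/-- The analytic spread `ℓ(I)`: the Krull dimension of `R(I)/m R(I)`, where `R(I) ⊆ S[t]`
is the Rees algebra of `I` and `m = (x_1, …, x_n)`. -/
noncomputable def analyticSpread {K : Type} [Field K] {n : ℕ}
    (I : Ideal (MvPolynomial (Fin n) K)) : ℕ :=
  ENat.toNat (WithBot.unbotD 0 (ringKrullDim ((reesAlgebra I) ⧸
    (Ideal.map (algebraMap (MvPolynomial (Fin n) K) (reesAlgebra I))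
      (Ideal.span (Set.range (X : Fin n → MvPolynomial (Fin n) K)))))))

/-- The height of an ideal `I`: the minimal height of a prime containing `I`. -/
noncomputable def idealHeight {K : Type} [Field K] {n : ℕ}
    (I : Ideal (MvPolynomial (Fin n) K)) : ℕ :=
  ENat.toNat (⨅ (p : PrimeSpectrum (MvPolynomial (Fin n) K)) (_ : I ≤ p.asIdeal),
    Order.height p)

/-! Castelnuovo–Mumford regularity via graded Betti numbers.  For a graded module
`M = I/J` (with `I`, `J` homogeneous ideals, `J ⊆ I`; take `J = ⊥` for `M = I`),
`β_{i,j}(M) = dim_K Tor_i^S(M, K)_j`, and `Tor_i^S(M, K)` is computed as the `i`-th homology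
of `M ⊗_S K_•(x_1, …, x_n)`, the Koszul complex. The degree-`j` strand of
`M ⊗ K_i` is `⊕_{T ⊆ [n], |T| = i} M_{j-i} · e_T`; we encode its elements as functions
from `Finset (Fin n)` to `S`, supported on the `i`-element subsets, with values homogeneous
of degree `j - i` lying in `I` (taken modulo componentwise membership in `J`). -/

/-- The Koszul differential `e_T ⊗ f ↦ ∑_{t ∈ T} (-1)^{|{u ∈ T : u < t}|} e_{T∖{t}} ⊗ x_t f`,
written for chains `c : Finset (Fin n) → S`. -/
noncomputable def koszulD {K : Type} [Field K] {n : ℕ}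
    (c : Finset (Fin n) → MvPolynomial (Fin n) K) :
    Finset (Fin n) → MvPolynomial (Fin n) K :=
  fun T => ∑ t ∈ Tᶜ, ((-1 : K) ^ (T.filter (fun u => u < t)).card) • (X t * c (insert t T))

/-- A chain of the degree-`j` strand of `I ⊗ K_i`: supported on `i`-element subsets, with
values in `I` homogeneous of degree `j - i`. -/
def IsKoszulChain {K : Type} [Field K] {n : ℕ} (I : Ideal (MvPolynomial (Fin n) K))
    (i j : ℕ) (c : Finset (Fin n) → MvPolynomial (Fin n) K) : Prop :=
  (∀ T : Finset (Fin n), T.card = i →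
      c T ∈ I ∧ c T ∈ homogeneousSubmodule (Fin n) K (j - i)) ∧
  (∀ T : Finset (Fin n), T.card ≠ i → c T = 0)

/-- `β_{i,j}(I/J) ≠ 0`: the degree-`j` strand of the Koszul homology
`Tor_i((I/J), K)` is nonzero, i.e. there is a cycle (modulo `J`) which is not a
boundary (modulo `J`). -/
def BettiNonzero {K : Type} [Field K] {n : ℕ} (I J : Ideal (MvPolynomial (Fin n) K))
    (i j : ℕ) : Prop :=
  ∃ c : Finset (Fin n) → MvPolynomial (Fin n) K,
    IsKoszulChain I i j c ∧ (∀ T, koszulD c T ∈ J) ∧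
      ¬ ∃ b : Finset (Fin n) → MvPolynomial (Fin n) K,
          IsKoszulChain I (i + 1) j b ∧ ∀ T, c T - koszulD b T ∈ J

/-- The Castelnuovo–Mumford regularity `reg(I/J) = max{j - i : β_{i,j}(I/J) ≠ 0}` of the
graded module `I/J` (use `J = ⊥` for the module `I` itself), with `reg 0 = ⊥ = -∞`. -/
noncomputable def cmReg {K : Type} [Field K] {n : ℕ}
    (I J : Ideal (MvPolynomial (Fin n) K)) : WithBot ℤ :=
  sSup {r : WithBot ℤ | ∃ i j : ℕ, BettiNonzero I J i j ∧ r = ((j : ℤ) - (i : ℤ) : ℤ)}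

/-! The integral closure of a monomial ideal is again monomial: it is stable under the rescalings
`xᵢ ↦ t xᵢ`, and over `R[t]` such rescalings separate the terms of an integral element. So if
`g xᵃ ∈ \overline{I}`, then `x^(w + a) ∈ \overline{I}` for every term `x^w` of `g`; a minimal
generator `u ∣ x^(w + a)` of `\overline{I}` has `uˢ ∈ Iˢ`, whence `(x^w)^(sm) x^((sm)a) ∈ I^(sm)`.
Conversely `g x^((sm)a) ∈ I^(sm)` gives `(g xᵃ)^(sm) ∈ I^(sm)`, so `g xᵃ ∈ \overline{I}`. -/

namespace Ideal

variable {R : Type*} [CommRing R]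

def IsIntegralElem (I : Ideal R) (f : R) : Prop :=
  ∃ k : ℕ, 1 ≤ k ∧ ∃ c : ℕ → R, (∀ i ∈ Finset.Icc 1 k, c i ∈ I ^ i) ∧
    f ^ k + ∑ i ∈ Finset.Icc 1 k, c i * f ^ (k - i) = 0

variable {I : Ideal R} {f : R}

lemma adjoin_C_mul_X_eq_reesAlgebra :
    Algebra.adjoin R {Polynomial.C r * Polynomial.X | r ∈ I} = reesAlgebra I := by
  rw [← adjoin_monomial_eq_reesAlgebra]
  congr 1
  ext p
  simp [Polynomial.C_mul_X_eq_monomial]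

lemma IsIntegralElem.isIntegral (hf : I.IsIntegralElem f) :
    IsIntegral (reesAlgebra I) (Polynomial.C f * Polynomial.X) := by
  obtain ⟨k, hk, c, hc, hf⟩ := hf
  let q : Polynomial (reesAlgebra I) := Polynomial.X ^ k + ∑ i ∈ Finset.Icc 1 k,
    if hi : i ∈ Finset.Icc 1 k then
      Polynomial.monomial (k - i)
        ⟨Polynomial.monomial i (c i), reesAlgebra.monomial_mem.2 (hc i hi)⟩
    else 0
  refine ⟨q, Polynomial.monic_X_pow_add ?_, ?_⟩
  · refine (Polynomial.degree_sum_le _ _).trans_lt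
      ((Finset.sup_lt_iff (WithBot.bot_lt_coe k)).2 fun i hi => ?_)
    rw [dif_pos hi]
    refine (Polynomial.degree_monomial_le _ _).trans_lt ?_
    have := (Finset.mem_Icc.1 hi).1
    exact Nat.cast_lt.2 (by omega)
  · rw [← Polynomial.aeval_def]
    calc Polynomial.aeval (Polynomial.C f * Polynomial.X) q
        = Polynomial.C (f ^ k + ∑ i ∈ Finset.Icc 1 k, c i * f ^ (k - i)) * Polynomial.X ^ k := by
          simp only [q, map_add, map_pow, Polynomial.aeval_X, map_sum, add_mul, Finset.sum_mul]
          refine congrArg₂ _ (mul_pow _ _ _) (Finset.sum_congr rfl fun i hi => ?_)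
          rw [dif_pos hi, Polynomial.aeval_monomial]
          change Polynomial.monomial i (c i) * (Polynomial.C f * Polynomial.X) ^ (k - i) = _
          rw [← Polynomial.C_mul_X_pow_eq_monomial, mul_pow, ← map_pow, mul_mul_mul_comm,
            ← pow_add, ← map_mul, Nat.add_sub_cancel' (Finset.mem_Icc.1 hi).2]
      _ = 0 := by rw [hf, map_zero, zero_mul]

lemma isIntegralElem_of_isIntegral
    (h : IsIntegral (reesAlgebra I) (Polynomial.C f * Polynomial.X)) : I.IsIntegralElem f := by
  rw [← adjoin_C_mul_X_eq_reesAlgebra] at h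
  obtain ⟨p, hp, hpf, hc⟩ := Polynomial.exists_monic_aeval_eq_zero_forall_mem_pow_of_isIntegral
    (S := R) (by convert h; exact Algebra.algebra_ext _ _ fun _ => Polynomial.map_id)
  cases subsingleton_or_nontrivial R
  · exact ⟨1, le_rfl, 0, fun _ _ => zero_mem _, Subsingleton.elim _ _⟩
  set k := p.natDegree
  have hk : 1 ≤ k := by
    by_contra! hk
    rw [Polynomial.eq_one_of_monic_natDegree_zero hp (by omega), map_one] at hpf
    exact one_ne_zero hpf
  refine ⟨k, hk, fun i => p.coeff (k - i), fun i hi => ?_, ?_⟩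
  · simpa [Nat.sub_sub_self (Finset.mem_Icc.1 hi).2] using hc (k - i)
  · rw [Polynomial.aeval_eq_sum_range, Finset.sum_range_succ, hp.coeff_natDegree, one_smul]
      at hpf
    rw [← hpf, add_comm, ← Finset.Ico_add_one_right_eq_Icc,
      Finset.sum_Ico_reflect (fun j => p.coeff j * f ^ j) 1 le_rfl, Nat.sub_self,
      Nat.add_sub_cancel, ← Finset.range_eq_Ico]
    simp only [smul_eq_mul, k]

lemma isIntegralElem_iff_isIntegral :
    I.IsIntegralElem f ↔ IsIntegral (reesAlgebra I) (Polynomial.C f * Polynomial.X) :=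
  ⟨IsIntegralElem.isIntegral, isIntegralElem_of_isIntegral⟩

/-- The elements integral over `I` form an ideal because `f` is integral over `I` exactly when
`f t` is integral over the Rees algebra `R[It]`. -/
def integralClosure (I : Ideal R) : Ideal R where
  carrier := {f | I.IsIntegralElem f}
  add_mem' hf hg := isIntegralElem_of_isIntegral <| by
    simpa only [map_add, add_mul] using hf.isIntegral.add hg.isIntegral
  zero_mem' := isIntegralElem_of_isIntegral <| by simpa using isIntegral_zero
  smul_mem' a f hf := isIntegralElem_of_isIntegral <| by
    rw [smul_eq_mul, map_mul, mul_assoc]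
    exact (isIntegral_algebraMap (x := algebraMap R (reesAlgebra I) a)).mul hf.isIntegral

lemma mem_integralClosure : f ∈ I.integralClosure ↔ I.IsIntegralElem f := Iff.rfl

lemma isIntegralElem_of_pow_mem {k : ℕ} (hk : 1 ≤ k) (h : f ^ k ∈ I ^ k) :
    I.IsIntegralElem f := by
  classical
  refine ⟨k, hk, fun i => if i = k then -f ^ k else 0, fun i _ => ?_, ?_⟩
  · beta_reduce
    split_ifs with hi
    · exact neg_mem (hi ▸ h)
    · exact zero_mem _
  · rw [Finset.sum_eq_single_of_mem k (Finset.mem_Icc.2 ⟨hk, le_rfl⟩)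
      fun i _ hi => by simp [hi]]
    simp

lemma IsIntegralElem.map {S F : Type*} [CommRing S] [FunLike F R S] [RingHomClass F R S]
    (φ : F) {J : Ideal S} (hIJ : I.map φ ≤ J) (hf : I.IsIntegralElem f) :
    J.IsIntegralElem (φ f) := by
  obtain ⟨k, hk, c, hc, hf⟩ := hf
  refine ⟨k, hk, fun i => φ (c i), fun i hi => ?_, ?_⟩
  · exact pow_right_mono hIJ i (Ideal.map_pow φ I i ▸ mem_map_of_mem φ (hc i hi))
  · simpa using congrArg φ hf

lemma colon_pow_le_colon_integralClosure {q : ℕ} (hq : 1 ≤ q) (v : R) :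
    (I ^ q).colon (span {v ^ q}) ≤ I.integralClosure.colon (span {v}) := by
  intro g hg
  rw [Submodule.mem_colon_span_singleton, smul_eq_mul] at hg ⊢
  refine isIntegralElem_of_pow_mem hq ?_
  have : (g * v) ^ q = g ^ (q - 1) * (g * v ^ q) := by
    rw [mul_pow, ← mul_assoc, ← pow_succ, Nat.sub_add_cancel hq]
  exact this ▸ mul_mem_left _ _ hg

end Ideal

namespace MvPolynomial

variable {σ R S : Type*} [CommRing R] [CommRing S]

variable (R) in
noncomputable def monomialIdeal (A : Set (σ →₀ ℕ)) : Ideal (MvPolynomial σ R) :=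
  Ideal.span ((fun a => monomial a (1 : R)) '' A)

lemma mem_of_forall_monomial_mem {I : Ideal (MvPolynomial σ R)} {f : MvPolynomial σ R}
    (h : ∀ w ∈ f.support, monomial w 1 ∈ I) : f ∈ I := by
  refine Ideal.span_le.2 ?_ (mem_ideal_span_monomial_image.2 fun w hw => ⟨w, hw, le_rfl⟩)
  rintro _ ⟨w, hw, rfl⟩
  exact h w hw

lemma monomial_mem_monomialIdeal_of_mem_support {A : Set (σ →₀ ℕ)} {f : MvPolynomial σ R}
    (hf : f ∈ monomialIdeal R A) {w : σ →₀ ℕ} (hw : w ∈ f.support) :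
    monomial w 1 ∈ monomialIdeal R A := by
  obtain ⟨a, ha, haw⟩ := mem_ideal_span_monomial_image.1 hf w hw
  exact mem_ideal_span_monomial_image.2 fun v hv =>
    ⟨a, ha, (Finset.mem_singleton.1 (support_monomial_subset hv)).symm ▸ haw⟩

lemma exists_monomialIdeal_pow_eq (A : Set (σ →₀ ℕ)) (k : ℕ) :
    ∃ B : Set (σ →₀ ℕ), monomialIdeal R A ^ k = monomialIdeal R B := by
  induction k with
  | zero =>
    refine ⟨{0}, ?_⟩
    simp [monomialIdeal]
  | succ k ih =>
    obtain ⟨B, hB⟩ := ih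
    refine ⟨Set.image2 (· + ·) B A, ?_⟩
    rw [pow_succ, hB, monomialIdeal, monomialIdeal, Ideal.span_mul_span', monomialIdeal]
    congr 1
    ext p
    simp [Set.mem_mul, Set.mem_add, monomial_mul]

lemma monomial_mem_pow_of_mem_support {A : Set (σ →₀ ℕ)} {k : ℕ} {f : MvPolynomial σ R}
    (hf : f ∈ monomialIdeal R A ^ k) {w : σ →₀ ℕ} (hw : w ∈ f.support) :
    monomial w 1 ∈ monomialIdeal R A ^ k := by
  obtain ⟨B, hB⟩ := exists_monomialIdeal_pow_eq (R := R) A k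
  rw [hB] at hf ⊢
  exact monomial_mem_monomialIdeal_of_mem_support hf hw

lemma map_monomialIdeal (φ : R →+* S) (A : Set (σ →₀ ℕ)) :
    (monomialIdeal R A).map (map φ) = monomialIdeal S A := by
  rw [monomialIdeal, Ideal.map_span, Set.image_image]
  simp only [map_monomial, map_one]
  rfl

noncomputable def scale (d : σ → R) : MvPolynomial σ R →ₐ[R] MvPolynomial σ R :=
  aeval fun j => C (d j) * X j

lemma scale_monomial (d : σ → R) (u : σ →₀ ℕ) (c : R) :
    scale d (monomial u c) = monomial u ((u.prod fun j e => d j ^ e) * c) := by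
  rw [scale, aeval_monomial, Finsupp.prod]
  simp only [mul_pow, Finset.prod_mul_distrib, ← map_pow, ← map_prod, prod_X_pow_eq_monomial,
    algebraMap_eq, C_mul_monomial, mul_one]
  rw [mul_comm, Finsupp.prod]

lemma coeff_scale (d : σ → R) (g : MvPolynomial σ R) (u : σ →₀ ℕ) :
    coeff u (scale d g) = (u.prod fun j e => d j ^ e) * coeff u g := by
  classical
  induction g using MvPolynomial.induction_on' with
  | monomial v c =>
    rw [scale_monomial, coeff_monomial, coeff_monomial]
    split_ifs with h
    · rw [h]
    · rw [mul_zero]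
  | add p q hp hq => rw [map_add, coeff_add, coeff_add, hp, hq, mul_add]

lemma map_scale_monomialIdeal_le (d : σ → R) (A : Set (σ →₀ ℕ)) :
    (monomialIdeal R A).map (scale d) ≤ monomialIdeal R A := by
  rw [monomialIdeal, Ideal.map_span, Ideal.span_le]
  rintro _ ⟨_, ⟨a, ha, rfl⟩, rfl⟩
  rw [scale_monomial, mul_one, ← mul_one (a.prod _), ← C_mul_monomial]
  exact Ideal.mul_mem_left _ _ (Ideal.subset_span ⟨a, ha, rfl⟩)

lemma prod_mulSingle_pow [DecidableEq σ] (i : σ) (t : R) (u : σ →₀ ℕ) :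
    (u.prod fun j e => (Pi.mulSingle i t : σ → R) j ^ e) = t ^ u i := by
  rw [Finsupp.prod, Finset.prod_eq_single i
    (fun j _ hj => by rw [Pi.mulSingle_eq_of_ne hj, one_pow])
    fun hi => by rw [Finsupp.notMem_support_iff.1 hi, pow_zero], Pi.mulSingle_eq_same]

lemma colon_le_radical_colon_pow {I J : Ideal (MvPolynomial σ R)} {s : ℕ}
    (hJ : ∀ f ∈ J, ∀ w ∈ f.support, monomial w 1 ∈ J)
    (hs : ∀ u, monomial u (1 : R) ∈ J → monomial u 1 ^ s ∈ I ^ s) (m : ℕ) (a : σ →₀ ℕ) :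
    J.colon (Ideal.span {monomial a (1 : R)}) ≤
      ((I ^ (s * m)).colon (Ideal.span {monomial a (1 : R) ^ (s * m)})).radical := by
  intro g hg
  rw [Submodule.mem_colon_span_singleton, smul_eq_mul] at hg
  refine mem_of_forall_monomial_mem fun w hw => ⟨s * m, ?_⟩
  have hwa : monomial (w + a) (1 : R) ∈ J :=
    hJ _ hg _ (mem_support_iff.2 (by rwa [coeff_mul_monomial, mul_one, ← mem_support_iff]))
  rw [Submodule.mem_colon_span_singleton, smul_eq_mul, ← mul_pow, monomial_mul, one_mul, pow_mul,
    pow_mul]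
  exact Ideal.pow_mem_pow (hs _ hwa) m

section IsDomain

variable [IsDomain R] {A : Set (σ →₀ ℕ)}

lemma isIntegralElem_monomial_one_of_monomial {w : σ →₀ ℕ} {c : R} (hc : c ≠ 0)
    (h : (monomialIdeal R A).IsIntegralElem (monomial w c)) :
    (monomialIdeal R A).IsIntegralElem (monomial w 1) := by
  classical
  obtain ⟨k, hk, c', hc', heq⟩ := h
  have hterm : ∀ i ∈ Finset.Icc 1 k, coeff (k • w) (c' i * monomial w c ^ (k - i)) =
      coeff (i • w) (c' i) * c ^ (k - i) := fun i hi => by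
    rw [monomial_pow, ← coeff_mul_monomial, ← add_smul,
      Nat.add_sub_cancel' (Finset.mem_Icc.1 hi).2]
  have hcoeff := congrArg (coeff (k • w)) heq
  rw [coeff_add, monomial_pow, coeff_monomial, if_pos rfl, coeff_sum, Finset.sum_congr rfl hterm,
    coeff_zero] at hcoeff
  obtain ⟨i, hi, hne⟩ : ∃ i ∈ Finset.Icc 1 k, coeff (i • w) (c' i) * c ^ (k - i) ≠ 0 := by
    by_contra! h0
    rw [Finset.sum_eq_zero h0, add_zero] at hcoeff
    exact pow_ne_zero k hc hcoeff
  refine Ideal.isIntegralElem_of_pow_mem (Finset.mem_Icc.1 hi).1 ?_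
  rw [monomial_pow, one_pow]
  exact monomial_mem_pow_of_mem_support (hc' i hi) (mem_support_iff.2 (left_ne_zero_of_mul hne))

/-- Induction on the size of the support: rescaling `xᵢ ↦ t xᵢ` and subtracting `t ^ (w' i)` times
`g` removes the terms `u` of `g` with `u i = w' i` and keeps the others up to nonzero factors. -/
lemma isIntegralElem_monomial_of_mem_support {t : R} (ht : Function.Injective (t ^ · : ℕ → R))
    {g : MvPolynomial σ R} (hg : (monomialIdeal R A).IsIntegralElem g) {w : σ →₀ ℕ}
    (hw : w ∈ g.support) : (monomialIdeal R A).IsIntegralElem (monomial w 1) := by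
  classical
  induction hcard : g.support.card using Nat.strong_induction_on generalizing g with
  | _ N ih =>
  by_cases hsingle : ∀ w' ∈ g.support, w' = w
  · rw [eq_monomial_of_support_subset_singleton hsingle] at hg
    exact isIntegralElem_monomial_one_of_monomial (mem_support_iff.1 hw) hg
  push Not at hsingle
  obtain ⟨w', hw', hne⟩ := hsingle
  obtain ⟨i, hi⟩ : ∃ i, w i ≠ w' i := by
    by_contra! h
    exact hne (Finsupp.ext fun i => (h i).symm)
  set h := scale (Pi.mulSingle i t) g - C (t ^ w' i) * g
  have hcoeff : ∀ u, coeff u h = (t ^ u i - t ^ w' i) * coeff u g := fun u => by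
    rw [coeff_sub, coeff_scale, prod_mulSingle_pow, coeff_C_mul, sub_mul]
  have hsupp : h.support = g.support.filter (fun u => u i ≠ w' i) := by
    ext u
    simp [mem_support_iff, hcoeff, sub_eq_zero, ht.eq_iff, and_comm]
  have hh : h ∈ (monomialIdeal R A).integralClosure :=
    Ideal.sub_mem _ (hg.map _ (map_scale_monomialIdeal_le _ _)) (Ideal.mul_mem_left _ _ hg)
  refine ih _ ?_ hh (by simp [hsupp, hw, hi]) rfl
  rw [← hcard, hsupp]
  exact Finset.card_lt_card (Finset.filter_ssubset.2 ⟨w', hw', by simp⟩)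

/-- Over `R[t]` the powers of `t` are distinct, so the rescaling argument applies there;
`t ↦ 0` brings the result back to `R`. -/
theorem monomial_mem_integralClosure_of_mem_support {f : MvPolynomial σ R}
    (hf : f ∈ (monomialIdeal R A).integralClosure) {w : σ →₀ ℕ} (hw : w ∈ f.support) :
    monomial w 1 ∈ (monomialIdeal R A).integralClosure := by
  have hX : Function.Injective ((Polynomial.X : Polynomial R) ^ · : ℕ → Polynomial R) :=
    fun a b hab => by simpa using congrArg Polynomial.natDegree hab
  have hf' := Ideal.IsIntegralElem.map (map Polynomial.C) (map_monomialIdeal _ A).le hf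
  have hw' : w ∈ (map (Polynomial.C : R →+* Polynomial R) f).support := by
    rwa [support_map_of_injective _ Polynomial.C_injective]
  simpa [Ideal.mem_integralClosure] using
    (isIntegralElem_monomial_of_mem_support hX hf' hw').map (map Polynomial.constantCoeff)
      (map_monomialIdeal _ A).le

end IsDomain

end MvPolynomial

lemma intCl_eq_integralClosure {K : Type} [Field K] {n : ℕ}
    (I : Ideal (MvPolynomial (Fin n) K)) :
    intCl I = I.integralClosure :=
  Ideal.span_eq I.integralClosure

lemma exists_mem_minGens_le {K : Type} [Field K] {n : ℕ} {J : Ideal (MvPolynomial (Fin n) K)}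
    {u : Fin n →₀ ℕ} (hu : monomial u (1 : K) ∈ J) : ∃ b ∈ minGens J, b ≤ u := by
  obtain ⟨b, ⟨hbu, hbJ⟩, hmin⟩ :=
    wellFounded_lt.has_min {b | b ≤ u ∧ monomial b (1 : K) ∈ J} ⟨u, le_rfl, hu⟩
  exact ⟨b, ⟨hbJ, fun b' hb' hne hb'J => hmin b' ⟨hb'.trans hbu, hb'J⟩ (hb'.lt_of_ne hne)⟩, hbu⟩

theorem radical_colon_intCl_eq_pow_general {K : Type} [Field K] {n : ℕ}
    (I : Ideal (MvPolynomial (Fin n) K))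
    (hmon : IsMonomialIdeal I)
    (s : ℕ) (hs : 1 ≤ s)
    (hgen : ∀ a ∈ minGens (intCl I), (monomial a (1 : K)) ^ s ∈ I ^ s)
    (m : ℕ) (hm : 1 ≤ m) (a : Fin n →₀ ℕ) :
    Ideal.radical ((intCl I).colon (Ideal.span {monomial a (1 : K)})) =
      Ideal.radical ((I ^ (s * m)).colon
        (Ideal.span {monomial ((s * m) • a) (1 : K)})) := by
  obtain ⟨A, rfl⟩ := hmon
  rw [intCl_eq_integralClosure] at hgen ⊢
  rw [show monomial ((s * m) • a) (1 : K) = monomial a 1 ^ (s * m) by rw [monomial_pow, one_pow]]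
  refine le_antisymm ?_ (Ideal.radical_mono
    (Ideal.colon_pow_le_colon_integralClosure (Nat.mul_le_mul hs hm) _))
  rw [Ideal.radical_le_radical_iff]
  refine colon_le_radical_colon_pow
    (fun f hf w hw => monomial_mem_integralClosure_of_mem_support (A := A) hf hw)
    (fun u hu => ?_) m a
  obtain ⟨b, hb, hbu⟩ := exists_mem_minGens_le hu
  rw [show monomial u (1 : K) = monomial b 1 * monomial (u - b) 1 by
    rw [monomial_mul, one_mul, add_tsub_cancel_of_le hbu], mul_pow]
  exact Ideal.mul_mem_right _ _ (hgen b hb)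

/-- Let `I` be a proper nonzero monomial ideal and `s ≥ 1` such that
`uˢ ∈ Iˢ` for every monomial `u ∈ G(\overline{I})`.  Then for every `m ≥ 1` and every
`a ∈ ℕ^n`, `√(\overline{I} : xᵃ) = √(I^{sm} : x^{(sm)a})`. -/
theorem radical_colon_intCl_eq_pow {K : Type} [Field K] {n : ℕ}
    (I : Ideal (MvPolynomial (Fin n) K))
    (hmon : IsMonomialIdeal I) (hbot : I ≠ ⊥) (htop : I ≠ ⊤)
    (s : ℕ) (hs : 1 ≤ s)
    (hgen : ∀ a ∈ minGens (intCl I), (monomial a (1 : K)) ^ s ∈ I ^ s)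
    (m : ℕ) (hm : 1 ≤ m) (a : Fin n →₀ ℕ) :
    Ideal.radical ((intCl I).colon (Ideal.span {monomial a (1 : K)})) =
      Ideal.radical ((I ^ (s * m)).colon
        (Ideal.span {monomial ((s * m) • a) (1 : K)})) :=
  radical_colon_intCl_eq_pow_general I hmon s hs hgen m hm a
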